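/- arXiv:2009.02955 — 2 statements merged into one kernel-verified Lean document; each statement's English description precedes it below -/
import Mathlib

section
/- Assume the eigenvalues are strictly ordered t_1 > t_2 > ⋯ > t_n. Let μ ∈ ℝ and 1 ≤ i < m with t_i ≠ μ. Then the first-order truncation error satisfies ‖Σ_{k=m+1}^{n} (⟨E v_i, v_k⟩/(t_i − t_k)) v_k − (1/(t_i − μ)) r_i‖ ≤ (Σ_{k=m+1}^{n} |t_k − μ|) · ‖E‖₂ / (|t_i − t_m| · |t_i − μ|). -/
/-! Orthonormality of the `v_k` gives `r_i = (I - V Vᵀ) E v_i = ∑_{k > m} ⟨E v_i, v_k⟩ v_k`, so the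
error vector is `∑_{k > m} ⟨E v_i, v_k⟩ (t_k - μ) / ((t_i - t_k)(t_i - μ)) v_k`. Each coefficient
`⟨E v_i, v_k⟩` is at most `‖E‖₂` in absolute value, the ordering of the eigenvalues gives
`|t_i - t_k| ≥ |t_i - t_m|` for `k > m`, and the triangle inequality concludes. -/

open Matrix Finset

section

variable {ι : Type*} [Fintype ι]

theorem sum_dotProduct_smul_eq_self_of_orthonormal [DecidableEq ι] {R : Type*} [CommRing R]
    {v : ι → ι → R} (hv : ∀ k l, v k ⬝ᵥ v l = if k = l then 1 else 0) (x : ι → R) :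
    ∑ k, (x ⬝ᵥ v k) • v k = x := by
  have hrows : of v * (of v)ᵀ = 1 := by
    ext k l
    simpa [mul_apply, one_apply, dotProduct] using hv k l
  have hcols : (of v)ᵀ * of v = 1 := mul_eq_one_comm.mp hrows
  calc ∑ k, (x ⬝ᵥ v k) • v k = (of v)ᵀ *ᵥ (of v *ᵥ x) := by
        rw [mulVec_transpose, vecMul_eq_sum]
        simp only [mulVec, of_apply, dotProduct_comm]
        rfl
    _ = x := by rw [mulVec_mulVec, hcols, one_mulVec]

theorem mul_transpose_mulVec_eq_sum {κ R : Type*} [Fintype κ] [CommSemiring R]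
    (V : Matrix ι κ R) (x : ι → R) :
    (V * Vᵀ) *ᵥ x = ∑ j, (x ⬝ᵥ Vᵀ j) • Vᵀ j := by
  rw [← mulVec_mulVec, ← vecMul_transpose, vecMul_eq_sum]
  simp only [mulVec, dotProduct_comm]

theorem norm_toLp_eq_one {v : ι → ℝ} (hv : v ⬝ᵥ v = 1) : ‖WithLp.toLp 2 v‖ = 1 := by
  rw [norm_eq_sqrt_real_inner, EuclideanSpace.inner_toLp_toLp, star_trivial, hv, Real.sqrt_one]

theorem abs_mulVec_dotProduct_le [DecidableEq ι] (E : Matrix ι ι ℝ) (x y : ι → ℝ) :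
    |E *ᵥ x ⬝ᵥ y| ≤ ‖toEuclideanCLM (𝕜 := ℝ) E‖ * ‖WithLp.toLp 2 x‖ * ‖WithLp.toLp 2 y‖ := by
  have h : E *ᵥ x ⬝ᵥ y = inner ℝ (WithLp.toLp 2 y) (toEuclideanCLM (𝕜 := ℝ) E (WithLp.toLp 2 x)) := by
    rw [inner_toEuclideanCLM, dotProduct_comm]
  calc |E *ᵥ x ⬝ᵥ y|
      ≤ ‖WithLp.toLp 2 y‖ * ‖toEuclideanCLM (𝕜 := ℝ) E (WithLp.toLp 2 x)‖ :=
        h ▸ abs_real_inner_le_norm _ _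
    _ ≤ ‖WithLp.toLp 2 y‖ * (‖toEuclideanCLM (𝕜 := ℝ) E‖ * ‖WithLp.toLp 2 x‖) := by
        gcongr; exact (toEuclideanCLM (𝕜 := ℝ) E).le_opNorm _
    _ = _ := by ring

theorem norm_toLp_sum_smul_le {κ : Type*} {s : Finset κ} {w : κ → ι → ℝ}
    (hw : ∀ k ∈ s, ‖WithLp.toLp 2 (w k)‖ = 1) (a : κ → ℝ) :
    ‖WithLp.toLp 2 (∑ k ∈ s, a k • w k)‖ ≤ ∑ k ∈ s, |a k| := by
  rw [WithLp.toLp_sum]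
  refine norm_sum_le_of_le s fun k hk => ?_
  rw [WithLp.toLp_smul, norm_smul, hw k hk, mul_one, Real.norm_eq_abs]

end

theorem sum_castLE_eq_sum_filter_lt {n m : ℕ} (hmn : m ≤ n) {M : Type*} [AddCommMonoid M]
    (g : Fin n → M) :
    ∑ j : Fin m, g (Fin.castLE hmn j) = ∑ k ∈ univ.filter (fun k : Fin n => (k : ℕ) < m), g k := by
  have : univ.filter (fun k : Fin n => (k : ℕ) < m) = univ.map (Fin.castLEEmb hmn) := by
    ext k
    simp only [mem_filter, mem_univ, true_and, mem_map, Fin.coe_castLEEmb]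
    exact ⟨fun hk => ⟨⟨k, hk⟩, rfl⟩, by rintro ⟨j, rfl⟩; exact j.isLt⟩
  rw [this, sum_map]
  rfl

theorem abs_sub_le_abs_sub_of_strictAnti {α : Type*} [PartialOrder α] {t : α → ℝ}
    (ht : StrictAnti t) {i j k : α} (hij : i < j) (hjk : j ≤ k) : |t i - t j| ≤ |t i - t k| := by
  have hji := ht hij
  have hkj := ht.antitone hjk
  rw [abs_of_pos (by linarith), abs_of_pos (by linarith)]
  linarith

theorem abs_div_sub_div_le {c N a s u μ : ℝ} (hc : |c| ≤ N) (ha : 0 < a) (has : a ≤ |s - u|)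
    (hμ : s ≠ μ) : |c / (s - u) - c / (s - μ)| ≤ |u - μ| * N / (a * |s - μ|) := by
  have hsu : s - u ≠ 0 := abs_pos.mp (ha.trans_le has)
  have hsμ : s - μ ≠ 0 := sub_ne_zero.mpr hμ
  have hN : 0 ≤ N := (abs_nonneg c).trans hc
  have hres : c / (s - u) - c / (s - μ) = c * (u - μ) / ((s - u) * (s - μ)) := by
    field_simp; ring
  rw [hres, abs_div, abs_mul, abs_mul, mul_comm |c|]
  gcongr

theorem one_sub_mul_transpose_mulVec_eq_sum_filter {n m : ℕ} (hmn : m ≤ n) {R : Type*} [CommRing R]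
    {v : Fin n → Fin n → R} (hv : ∀ k l, v k ⬝ᵥ v l = if k = l then 1 else 0)
    {V : Matrix (Fin n) (Fin m) R} (hV : ∀ p j, V p j = v (Fin.castLE hmn j) p) (x : Fin n → R) :
    (1 - V * Vᵀ) *ᵥ x = ∑ k ∈ univ.filter (fun k : Fin n => m ≤ (k : ℕ)), (x ⬝ᵥ v k) • v k := by
  have hcols : ∀ j, Vᵀ j = v (Fin.castLE hmn j) := fun j => funext fun p => hV p j
  rw [sub_mulVec, one_mulVec, mul_transpose_mulVec_eq_sum, sub_eq_iff_eq_add]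
  simp only [hcols]
  rw [sum_castLE_eq_sum_filter_lt hmn (fun k => (x ⬝ᵥ v k) • v k)]
  conv_lhs => rw [← sum_dotProduct_smul_eq_self_of_orthonormal hv x,
    ← sum_filter_add_sum_filter_not univ (fun k : Fin n => m ≤ (k : ℕ))]
  simp only [not_le]

/-- Error bound for the first-order truncated perturbation formula:
`‖∑_{k=m+1}^n (⟨E v_i, v_k⟩/(t_i − t_k)) v_k − (1/(t_i − μ)) r_i‖ ≤
 (∑_{k=m+1}^n |t_k − μ|) ‖E‖₂ / (|t_i − t_m| |t_i − μ|)`. -/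
theorem first_order_truncation_error_bound {n m : ℕ} (hmn : m ≤ n)
    (E : Matrix (Fin n) (Fin n) ℝ)
    (t : Fin n → ℝ) (v : Fin n → Fin n → ℝ)
    (hortho : ∀ k l : Fin n, v k ⬝ᵥ v l = if k = l then 1 else 0)
    (hord : ∀ k l : Fin n, k < l → t l < t k)
    (V : Matrix (Fin n) (Fin m) ℝ)
    (hV : ∀ (p : Fin n) (j : Fin m), V p j = v (Fin.castLE hmn j) p)
    (i : Fin n) (hi : (i : ℕ) + 1 < m)
    (r : Fin n → ℝ)
    (hr : r = ((1 : Matrix (Fin n) (Fin n) ℝ) - V * Vᵀ).mulVec (E.mulVec (v i)))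
    (μ : ℝ) (hμ : t i ≠ μ) :
    ‖(WithLp.equiv 2 (Fin n → ℝ)).symm
        ((∑ k ∈ Finset.univ.filter (fun k : Fin n => m ≤ (k : ℕ)),
            ((E.mulVec (v i) ⬝ᵥ v k) / (t i - t k)) • v k)
          - (1 / (t i - μ)) • r)‖ ≤
      (∑ k ∈ Finset.univ.filter (fun k : Fin n => m ≤ (k : ℕ)), |t k - μ|)
        * ‖Matrix.toEuclideanCLM (𝕜 := ℝ) E‖
        / (|t i - t ⟨m - 1, by omega⟩| * |t i - μ|) := by
  set S := univ.filter (fun k : Fin n => m ≤ (k : ℕ))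
  set c : Fin n → ℝ := fun k => E *ᵥ v i ⬝ᵥ v k
  have hunit : ∀ k, ‖WithLp.toLp 2 (v k)‖ = 1 := fun k =>
    norm_toLp_eq_one (by simpa using hortho k k)
  have hc : ∀ k, |c k| ≤ ‖toEuclideanCLM (𝕜 := ℝ) E‖ := fun k => by
    simpa [hunit] using abs_mulVec_dotProduct_le E (v i) (v k)
  set km : Fin n := ⟨m - 1, by omega⟩
  have hikm : i < km := Fin.lt_def.mpr (by simp only [km]; omega)
  have hgap : ∀ k ∈ S, |t i - t km| ≤ |t i - t k| := fun k hk =>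
    abs_sub_le_abs_sub_of_strictAnti hord hikm
      (Fin.le_def.mpr (by simp only [km]; have := (mem_filter.mp hk).2; omega))
  have hgap_pos : 0 < |t i - t km| := abs_pos.mpr (sub_ne_zero.mpr (hord _ _ hikm).ne')
  have hsplit : (∑ k ∈ S, (c k / (t i - t k)) • v k) - (1 / (t i - μ)) • r
      = ∑ k ∈ S, (c k / (t i - t k) - c k / (t i - μ)) • v k := by
    rw [hr, one_sub_mul_transpose_mulVec_eq_sum_filter hmn hortho hV, smul_sum,
      ← sum_sub_distrib]
    simp only [smul_smul, ← sub_smul, one_div_mul_eq_div, c]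
  rw [WithLp.equiv_symm_apply, hsplit, sum_mul, sum_div]
  refine (norm_toLp_sum_smul_le (fun k _ => hunit k) _).trans (sum_le_sum fun k hk => ?_)
  exact abs_div_sub_div_le (hc k) hgap_pos (hgap k hk) hμ
end

section
/- Let μ ∈ ℝ and 1 ≤ i ≤ m, and assume t_i ≠ μ and t_i ≠ t_k for all m+1 ≤ k ≤ n. Then the second-order truncation error vector satisfies the exact identity Σ_{k=m+1}^{n} (⟨E v_i, v_k⟩/(t_i − t_k)) v_k − [ (1/(t_i − μ)) r_i − (μ/(t_i − μ)²) r_i + (1/(t_i − μ)²) A' r_i ] = Σ_{k=m+1}^{n} ((t_k − μ)²/((t_i − t_k)(t_i − μ)²)) ⟨E v_i, v_k⟩ v_k. -/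
/-!
Expanding `E vᵢ` in the orthonormal eigenbasis, `rᵢ` keeps exactly the components along the tail
vectors `v_k` (`k ≥ m`), on which `A'` acts as `t_k`. The identity therefore holds coefficient by
coefficient, where it says that the bracket `1/(tᵢ - μ) + (t_k - μ)/(tᵢ - μ)²` is the first-order
Taylor expansion of `1/(tᵢ - t_k)` in `t_k` at `μ`, with exact remainder
`(t_k - μ)² / ((tᵢ - t_k)(tᵢ - μ)²)`.
-/

open Matrix Finset

section

variable {R ι : Type*} [CommRing R] [Fintype ι]

theorem sum_dotProduct_smul_eq_self [DecidableEq ι] {v : ι → ι → R}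
    (hv : ∀ k l, v k ⬝ᵥ v l = if k = l then 1 else 0) (u : ι → R) :
    ∑ k, (u ⬝ᵥ v k) • v k = u := by
  let P : Matrix ι ι R := Matrix.of v
  have hPP : P * Pᵀ = 1 := by
    ext k l
    simpa [P, Matrix.mul_apply, dotProduct, Matrix.one_apply] using hv k l
  calc ∑ k, (u ⬝ᵥ v k) • v k = (P *ᵥ u) ᵥ* P := by
        simp only [vecMul_eq_sum, mulVec, P, of_apply, dotProduct_comm]
        rfl
    _ = u ᵥ* (Pᵀ * P) := by rw [← vecMul_transpose, vecMul_vecMul]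
    _ = u := by rw [mul_eq_one_comm.mp hPP, vecMul_one]

theorem one_sub_mul_transpose_mulVec [DecidableEq ι] {κ : Type*} [Fintype κ] {v : ι → ι → R}
    (hv : ∀ k l, v k ⬝ᵥ v l = if k = l then 1 else 0) (e : κ ↪ ι) (V : Matrix ι κ R)
    (hV : ∀ p j, V p j = v (e j) p) (w : ι → R) :
    (1 - V * Vᵀ) *ᵥ w = ∑ k ∈ (univ.map e)ᶜ, (w ⬝ᵥ v k) • v k := by
  have hVt : Vᵀ = Matrix.of (v ∘ e) := by ext j p; simp [hV]
  have hVV : (V * Vᵀ) *ᵥ w = ∑ k ∈ univ.map e, (w ⬝ᵥ v k) • v k := by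
    rw [sum_map, ← mulVec_mulVec, ← vecMul_transpose, vecMul_eq_sum, hVt]
    simp only [mulVec, of_apply, Function.comp_apply, dotProduct_comm]
    rfl
  rw [sub_mulVec, one_mulVec, hVV]
  nth_rw 1 [← sum_dotProduct_smul_eq_self hv w, ← sum_compl_add_sum (univ.map e)]
  exact add_sub_cancel_right _ _

theorem mulVec_sum_smul_of_mulVec_eq_smul {A : Matrix ι ι R} {v : ι → ι → R} {t : ι → R}
    (hv : ∀ k, A *ᵥ v k = t k • v k) (s : Finset ι) (c : ι → R) :
    A *ᵥ ∑ k ∈ s, c k • v k = ∑ k ∈ s, (c k * t k) • v k := by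
  simp only [mulVec_sum, mulVec_smul, hv, smul_smul]

end

theorem Fin.compl_map_castLEEmb {m n : ℕ} (hmn : m ≤ n) :
    (univ.map (Fin.castLEEmb hmn))ᶜ = univ.filter (fun k : Fin n => m ≤ (k : ℕ)) := by
  ext k
  simp only [mem_compl, mem_map, mem_univ, true_and, coe_castLEEmb, not_exists, mem_filter]
  refine ⟨fun h => ?_, fun hk x hx => ?_⟩
  · by_contra! hk
    exact h ⟨k, hk⟩ rfl
  · subst hx
    exact absurd x.isLt (not_lt.mpr hk)

theorem one_div_sub_sub_first_order_eq {K : Type*} [Field K] {a t μ : K} (ht : a ≠ t) (hμ : a ≠ μ) :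
    1 / (a - t) - (1 / (a - μ) - μ / (a - μ) ^ 2 + t / (a - μ) ^ 2)
      = (t - μ) ^ 2 / ((a - t) * (a - μ) ^ 2) := by
  have : a - t ≠ 0 := sub_ne_zero.mpr ht
  have : a - μ ≠ 0 := sub_ne_zero.mpr hμ
  field_simp
  ring

theorem second_order_truncation_error_identity_general {n m : ℕ} (hmn : m ≤ n)
    (A' E : Matrix (Fin n) (Fin n) ℝ)
    (t : Fin n → ℝ) (v : Fin n → Fin n → ℝ)
    (hortho : ∀ k l : Fin n, v k ⬝ᵥ v l = if k = l then 1 else 0)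
    (heig : ∀ k : Fin n, A'.mulVec (v k) = t k • v k)
    (V : Matrix (Fin n) (Fin m) ℝ)
    (hV : ∀ (p : Fin n) (j : Fin m), V p j = v (Fin.castLE hmn j) p)
    (i : Fin n)
    (r : Fin n → ℝ)
    (hr : r = ((1 : Matrix (Fin n) (Fin n) ℝ) - V * Vᵀ).mulVec (E.mulVec (v i)))
    (μ : ℝ) (hμ : t i ≠ μ)
    (htk : ∀ k : Fin n, m ≤ (k : ℕ) → t i ≠ t k) :
    (∑ k ∈ Finset.univ.filter (fun k : Fin n => m ≤ (k : ℕ)),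
        ((E.mulVec (v i) ⬝ᵥ v k) / (t i - t k)) • v k)
      - ((1 / (t i - μ)) • r - (μ / (t i - μ) ^ 2) • r
          + (1 / (t i - μ) ^ 2) • A'.mulVec r) =
      ∑ k ∈ Finset.univ.filter (fun k : Fin n => m ≤ (k : ℕ)),
        ((t k - μ) ^ 2 / ((t i - t k) * (t i - μ) ^ 2) * (E.mulVec (v i) ⬝ᵥ v k)) • v k := by
  rw [hr, one_sub_mul_transpose_mulVec hortho (Fin.castLEEmb hmn) V hV,
    Fin.compl_map_castLEEmb, mulVec_sum_smul_of_mulVec_eq_smul heig, smul_sum, smul_sum, smul_sum,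
    ← sum_sub_distrib, ← sum_add_distrib, ← sum_sub_distrib]
  refine sum_congr rfl fun k hk => ?_
  rw [smul_smul, smul_smul, smul_smul, ← sub_smul, ← add_smul, ← sub_smul]
  congr 1
  have key := one_div_sub_sub_first_order_eq (htk k (mem_filter.mp hk).2) hμ
  linear_combination (E *ᵥ v i ⬝ᵥ v k) * key

/-- Exact identity for the second-order truncation error vector. -/
theorem second_order_truncation_error_identity {n m : ℕ} (hm1 : 1 ≤ m) (hmn : m ≤ n)
    (A' E : Matrix (Fin n) (Fin n) ℝ) (hA' : A'.IsSymm) (hE : E.IsSymm)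
    (t : Fin n → ℝ) (v : Fin n → Fin n → ℝ)
    (hortho : ∀ k l : Fin n, v k ⬝ᵥ v l = if k = l then 1 else 0)
    (heig : ∀ k : Fin n, A'.mulVec (v k) = t k • v k)
    (V : Matrix (Fin n) (Fin m) ℝ)
    (hV : ∀ (p : Fin n) (j : Fin m), V p j = v (Fin.castLE hmn j) p)
    (i : Fin n) (hi : (i : ℕ) < m)
    (r : Fin n → ℝ)
    (hr : r = ((1 : Matrix (Fin n) (Fin n) ℝ) - V * Vᵀ).mulVec (E.mulVec (v i)))
    (μ : ℝ) (hμ : t i ≠ μ)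
    (htk : ∀ k : Fin n, m ≤ (k : ℕ) → t i ≠ t k) :
    (∑ k ∈ Finset.univ.filter (fun k : Fin n => m ≤ (k : ℕ)),
        ((E.mulVec (v i) ⬝ᵥ v k) / (t i - t k)) • v k)
      - ((1 / (t i - μ)) • r - (μ / (t i - μ) ^ 2) • r
          + (1 / (t i - μ) ^ 2) • A'.mulVec r) =
      ∑ k ∈ Finset.univ.filter (fun k : Fin n => m ≤ (k : ℕ)),
        ((t k - μ) ^ 2 / ((t i - t k) * (t i - μ) ^ 2) * (E.mulVec (v i) ⬝ᵥ v k)) • v k :=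
  second_order_truncation_error_identity_general hmn A' E t v hortho heig V hV i r hr μ hμ htk
end
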